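/- arXiv:2007.11905 — 2 statements merged into one kernel-verified Lean document; each statement's English description precedes it below -/
import Mathlib

section
/- Let U and V be even MPO tensors over the same physical index set {0,…,d−1} and parity function, such that U/√d and V/√d are graded normal degenerate tensors and each of U and V generates a type II fMPU with antiperiodic boundary conditions. Then there exist an integer D′ ≥ 1, a diagonal ±1 matrix Z′ ∈ M_{D′}(ℂ), and an even MPO tensor W with respect to Z′ such that for every N ≥ 1: W^{(N)} = (2^{−1/2} U^{(N)}) · (2^{−1/2} V^{(N)}) as matrices in M_{d^N}(ℂ). In particular, the product of two type II fMPUs can be represented as a type I fMPU. -/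
open Matrix Kronecker
open scoped ComplexOrder

namespace FQCA

noncomputable section

/-- The sign `(-1)^x` associated with a parity `x ∈ ℤ₂`. -/
def sgn (x : ZMod 2) : ℂ := (-1 : ℂ) ^ x.val

/-- Entrywise complex conjugation of a matrix. -/
def mconj {m n : Type*} (A : Matrix m n ℂ) : Matrix m n ℂ := A.map (starRingEnd ℂ)

/-- A diagonal matrix with diagonal entries `±1`. -/
def IsParityMatrix {ν : Type*} (Z : Matrix ν ν ℂ) : Prop :=
  Z.IsDiag ∧ ∀ α, Z α α = 1 ∨ Z α α = -1

/-- An even tensor: `Z * A i = (-1)^{|i|} A i * Z`. -/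
def EvenTensor {ι ν : Type*} [Fintype ν] (p : ι → ZMod 2)
    (A : ι → Matrix ν ν ℂ) (Z : Matrix ν ν ℂ) : Prop :=
  ∀ i, Z * A i = sgn (p i) • (A i * Z)

/-- The transfer matrix `E_A = Σ_i A^i ⊗ conj (A^i)`. -/
def transfer {ι ν : Type*} [Fintype ι] (A : ι → Matrix ν ν ℂ) :
    Matrix (ν × ν) (ν × ν) ℂ :=
  ∑ i, (A i) ⊗ₖ (mconj (A i))

/-- `P` is the orthogonal projector of a nonzero proper graded invariant subspace for `A`. -/
def GradedInvariantProj {ι ν : Type*} [Fintype ν] [DecidableEq ν]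
    (A : ι → Matrix ν ν ℂ) (Z P : Matrix ν ν ℂ) : Prop :=
  P * P = P ∧ Pᴴ = P ∧ P ≠ 0 ∧ P ≠ 1 ∧ P * Z = Z * P ∧ ∀ i, A i * P = P * (A i * P)

/-- A graded irreducible tensor: no nonzero proper graded invariant subspace. -/
def GradedIrreducible {ι ν : Type*} [Fintype ν] [DecidableEq ν]
    (A : ι → Matrix ν ν ℂ) (Z : Matrix ν ν ℂ) : Prop :=
  ¬ ∃ P, GradedInvariantProj A Z P

/-- A graded normal tensor, `mult = 1` (non-degenerate) or `2` (degenerate):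
graded irreducible, `1` is an eigenvalue of the transfer matrix of algebraic multiplicity
`mult`, and all other eigenvalues have modulus `< 1`. -/
def GradedNormal {ι ν : Type*} [Fintype ι] [Fintype ν] [DecidableEq ν]
    (A : ι → Matrix ν ν ℂ) (Z : Matrix ν ν ℂ) (mult : ℕ) : Prop :=
  GradedIrreducible A Z ∧
  (Matrix.charpoly (transfer A)).rootMultiplicity 1 = mult ∧
  ∀ μ ∈ spectrum ℂ (transfer A), μ ≠ 1 → ‖μ‖ < 1

/-- Graded Canonical Form: `A^i = ⊕ₖ μₖ Aₖ^i` with `Z` block diagonal in the same way and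
every block a graded normal tensor. -/
def GCF {ι ν : Type*} [Fintype ι] [Fintype ν] [DecidableEq ν]
    (p : ι → ZMod 2) (A : ι → Matrix ν ν ℂ) (Z : Matrix ν ν ℂ) : Prop :=
  ∃ (g : ℕ) (Dk : Fin g → ℕ) (e : ν ≃ ((k : Fin g) × Fin (Dk k)))
    (μ : Fin g → ℂ)
    (Ak : (k : Fin g) → ι → Matrix (Fin (Dk k)) (Fin (Dk k)) ℂ)
    (Zk : (k : Fin g) → Matrix (Fin (Dk k)) (Fin (Dk k)) ℂ),
    0 < g ∧
    (∀ i, Matrix.reindex e e (A i) = Matrix.blockDiagonal' (fun k => μ k • Ak k i)) ∧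
    Matrix.reindex e e Z = Matrix.blockDiagonal' Zk ∧
    ∀ k, IsParityMatrix (Zk k) ∧ EvenTensor p (Ak k) (Zk k) ∧
      (GradedNormal (Ak k) (Zk k) 1 ∨ GradedNormal (Ak k) (Zk k) 2)

/-- The coefficient `tr(A^{n₁} ⋯ A^{n_N})` of the fMPS with antiperiodic boundary
conditions generated by the tensor `A`. -/
def mpsCoeff {ι ν : Type*} [Fintype ν] [DecidableEq ν] {N : ℕ}
    (A : ι → Matrix ν ν ℂ) (n : Fin N → ι) : ℂ :=
  ((List.ofFn fun j => A (n j)).prod).trace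

/-- The fermionic sign `σ(n,m) = Σ_{k<j} (|n_j|+|m_j|)·|m_k|` of an fMPO matrix element. -/
def mpoSign {ι : Type*} (p : ι → ZMod 2) {N : ℕ} (n m : Fin N → ι) : ZMod 2 :=
  ∑ jk ∈ Finset.univ.filter (fun jk : Fin N × Fin N => jk.2 < jk.1),
    (p (n jk.1) + p (m jk.1)) * p (m jk.2)

/-- The fMPO with antiperiodic boundary conditions generated by the MPO tensor `U`. -/
def fMPO {ι : Type*} (p : ι → ZMod 2) {ν : Type*} [Fintype ν] [DecidableEq ν]
    (U : ι → ι → Matrix ν ν ℂ) (N : ℕ) :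
    Matrix (Fin N → ι) (Fin N → ι) ℂ :=
  Matrix.of fun n m =>
    sgn (mpoSign p n m) * ((List.ofFn fun j => U (n j) (m j)).prod).trace

/-- The fMPO with periodic boundary conditions generated by the MPO tensor `U`
(parity operator `Z` inserted in the trace). -/
def fMPO_PBC {ι : Type*} (p : ι → ZMod 2) {ν : Type*} [Fintype ν] [DecidableEq ν]
    (Z : Matrix ν ν ℂ) (U : ι → ι → Matrix ν ν ℂ) (N : ℕ) :
    Matrix (Fin N → ι) (Fin N → ι) ℂ :=
  Matrix.of fun n m =>
    sgn (mpoSign p n m) * (Z * (List.ofFn fun j => U (n j) (m j)).prod).trace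

/-- The fermionic blocking sign `τ(n,m) = Σ_{j<l} |m_j|·(|n_l|+|m_l|)`. -/
def blockSign {ι : Type*} (p : ι → ZMod 2) {q : ℕ} (n m : Fin q → ι) : ZMod 2 :=
  ∑ jl ∈ Finset.univ.filter (fun jl : Fin q × Fin q => jl.1 < jl.2),
    p (m jl.1) * (p (n jl.2) + p (m jl.2))

/-- The `q`-fold blocked MPO tensor, with the fermionic blocking signs. -/
def blocked {ι : Type*} (p : ι → ZMod 2) {ν : Type*} [Fintype ν] [DecidableEq ν]
    (U : ι → ι → Matrix ν ν ℂ) (q : ℕ) :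
    (Fin q → ι) → (Fin q → ι) → Matrix ν ν ℂ :=
  fun n m => sgn (blockSign p n m) • ((List.ofFn fun j => U (n j) (m j)).prod)

/-- The right rank `r(U)`: rank of the matrix with entry
`(-1)^{|n||m|} (U^{n,m})_{α,β}` in row `(n,β)` and column `(m,α)`. -/
def rightRank {ι ν : Type*} [Fintype ι] [Fintype ν]
    (p : ι → ZMod 2) (U : ι → ι → Matrix ν ν ℂ) : ℕ :=
  (Matrix.of fun (r c : ι × ν) => sgn (p r.1 * p c.1) * U r.1 c.1 c.2 r.2).rank

/-- The left rank `ℓ(U)`: rank of the matrix with entry `(U^{n,m})_{α,β}`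
in row `(n,α)` and column `(m,β)`. -/
def leftRank {ι ν : Type*} [Fintype ι] [Fintype ν]
    (U : ι → ι → Matrix ν ν ℂ) : ℕ :=
  (Matrix.of fun (r c : ι × ν) => U r.1 c.1 r.2 c.2).rank

/-- The Pauli matrix `σˣ`, indexed by `Bool`. -/
def pauliX : Matrix Bool Bool ℂ := Matrix.of fun a b => if a = b then 0 else 1

/-- The Pauli matrix `σᶻ`, indexed by `Bool`. -/
def pauliZ : Matrix Bool Bool ℂ := Matrix.diagonal (fun b => if b then -1 else 1)

/-- The single-site physical parity matrix `P = diag((-1)^{|i|})`. -/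
def singleP {ι : Type*} [DecidableEq ι] (p : ι → ZMod 2) : Matrix ι ι ℂ :=
  Matrix.diagonal (fun i => sgn (p i))

/-- The parity of the doubled physical index `(n,m)` of an MPO tensor. -/
def doubledP {ι : Type*} (p : ι → ZMod 2) : ι × ι → ZMod 2 :=
  fun nm => p nm.1 + p nm.2

/-- An MPO tensor regarded as a tensor in the doubled physical index. -/
def doubledT {ι ν : Type*} (U : ι → ι → Matrix ν ν ℂ) : ι × ι → Matrix ν ν ℂ :=
  fun nm => U nm.1 nm.2

/-- An MPO tensor rescaled by `c`, regarded as a tensor in the doubled physical index. -/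
def mpoScaled {ι ν : Type*} (c : ℂ) (U : ι → ι → Matrix ν ν ℂ) : ι × ι → Matrix ν ν ℂ :=
  fun nm => c • U nm.1 nm.2

/-- The parity operator `σᶻ ⊗ I` on the bond space `Bool × Fin b`. -/
def ZBP (b : ℕ) : Matrix (Bool × Fin b) (Bool × Fin b) ℂ :=
  pauliZ ⊗ₖ (1 : Matrix (Fin b) (Fin b) ℂ)

/-- Structure of a type II MPO tensor: `U^{n,m} = (σˣ)^{|n|+|m|} ⊗ N^{n,m}`. -/
def TypeIIStruct {d b : ℕ} (p : Fin d → ZMod 2)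
    (U : Fin d → Fin d → Matrix (Bool × Fin b) (Bool × Fin b) ℂ) : Prop :=
  ∃ Nm : Fin d → Fin d → Matrix (Fin b) (Fin b) ℂ,
    ∀ n m', U n m' = (pauliX ^ (p n + p m').val) ⊗ₖ Nm n m'

/-- The parity matrix of the product grading on `q` sites. -/
def bigP {d : ℕ} (p : Fin d → ZMod 2) (q : ℕ) :
    Matrix (Fin q → Fin d) (Fin q → Fin d) ℂ :=
  Matrix.diagonal (fun n => sgn (∑ i, p (n i)))

/-- The Jordan-Wigner embedding at site `j` of a local operator `O` homogeneous of
parity `o`: `P^{|O|} ⊗ ⋯ ⊗ P^{|O|} ⊗ O ⊗ I ⊗ ⋯ ⊗ I`. -/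
def jordanWigner {d N : ℕ} (p : Fin d → ZMod 2) (o : ZMod 2)
    (O : Matrix (Fin d) (Fin d) ℂ) (j : Fin N) :
    Matrix (Fin N → Fin d) (Fin N → Fin d) ℂ :=
  Matrix.of fun n m =>
    (∏ l ∈ Finset.univ.filter (fun l : Fin N => l < j),
      ((singleP p) ^ o.val) (n l) (m l)) *
    O (n j) (m j) *
    (∏ l ∈ Finset.univ.filter (fun l : Fin N => j < l),
      (if n l = m l then (1:ℂ) else 0))


/-! Write `U^{n,m} = X^{|n|+|m|} ⊗ N_U^{n,m}` and `V^{n,m} = X^{|n|+|m|} ⊗ N_V^{n,m}`. In the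
product `U^{(N)} V^{(N)}` the two Pauli factors `X^{|n|+|k|}` and `X^{|k|+|m|}` can be carried by a
single qubit as the Pauli word `X^{|n|+|k|} Y^{|k|+|m|}`, so the product is generated by
`W^{n,m} = Σ_k X^{|n|+|k|} Y^{|k|+|m|} ⊗ N_U^{n,k} ⊗ N_V^{k,m}`. Reordering a product of Pauli
words to `X^{Σa} Y^{Σb}` costs the sign `(-1)^{Σ_{i<j} b_i a_j}`, which is exactly the discrepancy
`σ(n,k) + σ(k,m) - σ(n,m)` between the fermionic signs, and `tr (X^a Y^b) = ½ tr (X^a) tr (X^b)`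
produces the factor `½ = (2^{-1/2})²`. Being a product of two unitaries, `W^{(N)}` is unitary. -/

@[simp] lemma sgn_zero : sgn 0 = 1 := by simp [sgn]

@[simp] lemma sgn_one : sgn 1 = -1 := by simp [sgn, ZMod.val_one]

lemma zmod_two_eq_zero_or_one (a : ZMod 2) : a = 0 ∨ a = 1 := by
  revert a; decide

lemma sgn_add (a b : ZMod 2) : sgn (a + b) = sgn a * sgn b := by
  rw [sgn, sgn, sgn, ZMod.val_add, ← pow_add, ← neg_one_pow_eq_pow_mod_two]

section Anticommute

variable {R : Type*} [Ring R] {x y : R}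

lemma pow_val_mul_pow_val_of_mul_self (h : x * x = 1) (a b : ZMod 2) :
    x ^ a.val * x ^ b.val = x ^ (a + b).val := by
  rw [← pow_add, ZMod.val_add, pow_eq_pow_mod _ (by rwa [sq])]

lemma pow_val_mul_pow_val_of_mul_eq_neg [Algebra ℂ R] (h : y * x = -(x * y)) (b c : ZMod 2) :
    y ^ b.val * x ^ c.val = sgn (b * c) • (x ^ c.val * y ^ b.val) := by
  obtain rfl | rfl := zmod_two_eq_zero_or_one b <;>
    obtain rfl | rfl := zmod_two_eq_zero_or_one c <;> simp [ZMod.val_one, h]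

end Anticommute

def pauliY : Matrix Bool Bool ℂ :=
  Matrix.of fun a b => if a = b then 0 else if a then Complex.I else -Complex.I

lemma pauliX_mul_self : pauliX * pauliX = 1 := by
  ext i j; cases i <;> cases j <;> simp [pauliX, mul_apply]

lemma pauliY_mul_self : pauliY * pauliY = 1 := by
  ext i j; cases i <;> cases j <;> simp [pauliY, mul_apply]

lemma pauliY_mul_pauliX : pauliY * pauliX = -(pauliX * pauliY) := by
  ext i j; cases i <;> cases j <;> simp [pauliX, pauliY, mul_apply]

lemma pauliZ_mul_pauliX : pauliZ * pauliX = -(pauliX * pauliZ) := by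
  ext i j; cases i <;> cases j <;> simp [pauliX, pauliZ, mul_apply]

lemma pauliZ_mul_pauliY : pauliZ * pauliY = -(pauliY * pauliZ) := by
  ext i j; cases i <;> cases j <;> simp [pauliY, pauliZ, mul_apply]

def pauliWord (a b : ZMod 2) : Matrix Bool Bool ℂ := pauliX ^ a.val * pauliY ^ b.val

@[simp] lemma pauliWord_zero_zero : pauliWord 0 0 = 1 := by simp [pauliWord]

lemma pauliWord_mul (a b c d : ZMod 2) :
    pauliWord a b * pauliWord c d = sgn (b * c) • pauliWord (a + c) (b + d) := by
  calc pauliWord a b * pauliWord c d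
      = pauliX ^ a.val * (pauliY ^ b.val * pauliX ^ c.val) * pauliY ^ d.val := by
        simp only [pauliWord, mul_assoc]
    _ = sgn (b * c) • ((pauliX ^ a.val * pauliX ^ c.val) * (pauliY ^ b.val * pauliY ^ d.val)) := by
        rw [pow_val_mul_pow_val_of_mul_eq_neg pauliY_mul_pauliX]
        simp only [mul_smul_comm, smul_mul_assoc, mul_assoc]
    _ = sgn (b * c) • pauliWord (a + c) (b + d) := by
        rw [pow_val_mul_pow_val_of_mul_self pauliX_mul_self,
          pow_val_mul_pow_val_of_mul_self pauliY_mul_self, pauliWord]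

lemma pauliZ_mul_pauliWord (a b : ZMod 2) :
    pauliZ * pauliWord a b = sgn (a + b) • (pauliWord a b * pauliZ) := by
  have hX := pow_val_mul_pow_val_of_mul_eq_neg pauliZ_mul_pauliX 1 a
  have hY := pow_val_mul_pow_val_of_mul_eq_neg pauliZ_mul_pauliY 1 b
  simp only [ZMod.val_one, pow_one, one_mul] at hX hY
  rw [pauliWord, ← mul_assoc, hX, smul_mul_assoc, mul_assoc, hY, mul_smul_comm, smul_smul,
    sgn_add, mul_assoc]

lemma trace_pauliWord (a b : ZMod 2) :
    (pauliWord a b).trace = if a = 0 ∧ b = 0 then 2 else 0 := by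
  obtain rfl | rfl := zmod_two_eq_zero_or_one a <;>
    obtain rfl | rfl := zmod_two_eq_zero_or_one b <;>
    simp [pauliWord, pauliX, pauliY, trace, mul_apply, ZMod.val_one]

lemma two_mul_trace_pauliWord (a b : ZMod 2) :
    2 * (pauliWord a b).trace = (pauliWord a 0).trace * (pauliWord b 0).trace := by
  obtain rfl | rfl := zmod_two_eq_zero_or_one a <;>
    obtain rfl | rfl := zmod_two_eq_zero_or_one b <;> simp [trace_pauliWord]

/-- `pairSum g = Σ_{i < j} g j i`; thus `mpoSign p n m = pairSum fun j i => (|n_j|+|m_j|)·|m_i|`. -/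
def pairSum {M : Type*} [AddCommMonoid M] {N : ℕ} (g : Fin N → Fin N → M) : M :=
  ∑ ji ∈ Finset.univ.filter (fun ji : Fin N × Fin N => ji.2 < ji.1), g ji.1 ji.2

lemma pairSum_succ {M : Type*} [AddCommMonoid M] {N : ℕ} (g : Fin (N + 1) → Fin (N + 1) → M) :
    pairSum g = ∑ j : Fin N, g j.succ 0 + pairSum fun j i : Fin N => g j.succ i.succ := by
  have inner (j : Fin N) : (∑ i : Fin (N + 1), if i < j.succ then g j.succ i else 0) =
      g j.succ 0 + ∑ i : Fin N, if i < j then g j.succ i.succ else 0 := by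
    simp [Fin.sum_univ_succ, Fin.succ_pos]
  simp only [pairSum, Finset.sum_filter, Fintype.sum_prod_type, Fin.sum_univ_succ (f := fun j =>
    ∑ i : Fin (N + 1), if i < j then g j i else 0), Fin.not_lt_zero, if_false,
    Finset.sum_const_zero, zero_add, inner, Finset.sum_add_distrib]

lemma mpoSign_add_mpoSign {ι : Type*} (p : ι → ZMod 2) {N : ℕ} (n k m : Fin N → ι) :
    mpoSign p n k + mpoSign p k m =
      mpoSign p n m + pairSum fun j i => (p (k i) + p (m i)) * (p (n j) + p (k j)) := by
  simp only [mpoSign, pairSum, ← Finset.sum_add_distrib]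
  refine Finset.sum_congr rfl fun ji _ => ?_
  grind

lemma list_prod_ofFn_kronecker {R ρ ρ' : Type*} [CommRing R] [Fintype ρ] [DecidableEq ρ]
    [Fintype ρ'] [DecidableEq ρ'] {N : ℕ} (A : Fin N → Matrix ρ ρ R) (B : Fin N → Matrix ρ' ρ' R) :
    (List.ofFn fun j => A j ⊗ₖ B j).prod = (List.ofFn A).prod ⊗ₖ (List.ofFn B).prod := by
  induction N with
  | zero => simp
  | succ N ih => simp only [List.ofFn_succ, List.prod_cons, ih, mul_kronecker_mul]

lemma list_prod_ofFn_sum {R κ : Type*} [Semiring R] [Fintype κ] {N : ℕ} (T : Fin N → κ → R) :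
    (List.ofFn fun j => ∑ k, T j k).prod =
      ∑ k : Fin N → κ, (List.ofFn fun j => T j (k j)).prod := by
  induction N with
  | zero => simp
  | succ N ih =>
    rw [List.ofFn_succ, List.prod_cons, ih, Finset.sum_mul_sum,
      ← (Fin.consEquiv fun _ => κ).sum_comp, Fintype.sum_prod_type]
    simp [Fin.consEquiv, List.ofFn_succ]

lemma list_prod_ofFn_pauliWord_kronecker {ρ : Type*} [Fintype ρ] [DecidableEq ρ] {N : ℕ}
    (a b : Fin N → ZMod 2) (M : Fin N → Matrix ρ ρ ℂ) :
    (List.ofFn fun j => pauliWord (a j) (b j) ⊗ₖ M j).prod =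
      sgn (pairSum fun j i => b i * a j) •
        (pauliWord (∑ j, a j) (∑ j, b j) ⊗ₖ (List.ofFn M).prod) := by
  induction N with
  | zero => simp [pairSum]
  | succ N ih =>
    rw [List.ofFn_succ, List.prod_cons, ih, mul_smul_comm, ← mul_kronecker_mul, pauliWord_mul,
      smul_kronecker, smul_smul, ← sgn_add, pairSum_succ, Fin.sum_univ_succ a,
      Fin.sum_univ_succ b, List.ofFn_succ, List.prod_cons, Finset.mul_sum, add_comm]

lemma trace_reindex {ν ν' : Type*} [Fintype ν] [Fintype ν'] (e : ν ≃ ν') (A : Matrix ν ν ℂ) :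
    (reindex e e A).trace = A.trace :=
  e.symm.sum_comp fun i => A i i

lemma IsParityMatrix.reindex {ν ν' : Type*} {Z : Matrix ν ν ℂ} (h : IsParityMatrix Z)
    (e : ν ≃ ν') : IsParityMatrix (reindex e e Z) :=
  ⟨h.1.submatrix e.symm.injective, fun α => h.2 (e.symm α)⟩

section Reindex

variable {ι ν ν' : Type*} [Fintype ν] [DecidableEq ν] [Fintype ν'] [DecidableEq ν'] (e : ν ≃ ν')

lemma fMPO_reindex (p : ι → ZMod 2) (W : ι → ι → Matrix ν ν ℂ) (N : ℕ) :
    fMPO p (fun n m => reindex e e (W n m)) N = fMPO p W N := by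
  ext n m
  simp only [fMPO, of_apply]
  rw [← trace_reindex e, ← coe_reindexAlgEquiv ℂ ℂ e, map_list_prod, List.map_ofFn]
  rfl

lemma EvenTensor.reindex {p : ι → ZMod 2} {A : ι → Matrix ν ν ℂ} {Z : Matrix ν ν ℂ}
    (h : EvenTensor p A Z) : EvenTensor p (fun i => reindex e e (A i)) (reindex e e Z) := by
  intro i
  simp only [← coe_reindexAlgEquiv ℂ ℂ e, ← map_mul, h i, map_smul]

end Reindex

lemma IsParityMatrix.kronecker {ν ν' : Type*} {A : Matrix ν ν ℂ} {B : Matrix ν' ν' ℂ}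
    (hA : IsParityMatrix A) (hB : IsParityMatrix B) : IsParityMatrix (A ⊗ₖ B) := by
  refine ⟨hA.1.kronecker hB.1, fun α => ?_⟩
  rw [kronecker_apply]
  rcases hA.2 α.1 with h | h <;> rcases hB.2 α.2 with h' | h' <;> simp [h, h']

lemma isParityMatrix_one {ν : Type*} [DecidableEq ν] : IsParityMatrix (1 : Matrix ν ν ℂ) :=
  ⟨isDiag_one, fun _ => Or.inl (one_apply_eq _)⟩

lemma isParityMatrix_pauliZ : IsParityMatrix pauliZ :=
  ⟨isDiag_diagonal _, fun b => by cases b <;> simp [pauliZ]⟩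


section TypeII

variable {ι κ κ' : Type*} (p : ι → ZMod 2) [Fintype κ] [DecidableEq κ] [Fintype κ']
  [DecidableEq κ']

def typeIITensor (Nm : ι → ι → Matrix κ κ ℂ) : ι → ι → Matrix (Bool × κ) (Bool × κ) ℂ :=
  fun n m => pauliWord (p n + p m) 0 ⊗ₖ Nm n m

def typeIIProduct [Fintype ι] (Nu : ι → ι → Matrix κ κ ℂ) (Nv : ι → ι → Matrix κ' κ' ℂ) :
    ι → ι → Matrix (Bool × κ × κ') (Bool × κ × κ') ℂ :=
  fun n m => ∑ k, pauliWord (p n + p k) (p k + p m) ⊗ₖ (Nu n k ⊗ₖ Nv k m)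

lemma fMPO_typeIITensor_apply (Nm : ι → ι → Matrix κ κ ℂ) {N : ℕ} (n m : Fin N → ι) :
    fMPO p (typeIITensor p Nm) N n m =
      sgn (mpoSign p n m) * ((pauliWord (∑ j, (p (n j) + p (m j))) 0).trace *
        (List.ofFn fun j => Nm (n j) (m j)).prod.trace) := by
  simp only [fMPO, of_apply, typeIITensor]
  rw [list_prod_ofFn_pauliWord_kronecker (fun j => p (n j) + p (m j)) fun _ => 0, trace_smul,
    trace_kronecker]
  simp [pairSum]

lemma fMPO_typeIIProduct_apply [Fintype ι] (Nu : ι → ι → Matrix κ κ ℂ)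
    (Nv : ι → ι → Matrix κ' κ' ℂ) {N : ℕ} (n m : Fin N → ι) :
    fMPO p (typeIIProduct p Nu Nv) N n m = ∑ k : Fin N → ι,
      sgn (mpoSign p n k + mpoSign p k m) *
        ((pauliWord (∑ j, (p (n j) + p (k j))) (∑ j, (p (k j) + p (m j)))).trace *
          ((List.ofFn fun j => Nu (n j) (k j)).prod.trace *
            (List.ofFn fun j => Nv (k j) (m j)).prod.trace)) := by
  simp only [fMPO, of_apply, typeIIProduct]
  rw [list_prod_ofFn_sum, trace_sum, Finset.mul_sum]
  refine Finset.sum_congr rfl fun k _ => ?_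
  rw [list_prod_ofFn_pauliWord_kronecker (fun j => p (n j) + p (k j))
      (fun j => p (k j) + p (m j)), trace_smul, list_prod_ofFn_kronecker, trace_kronecker,
    trace_kronecker, mpoSign_add_mpoSign, sgn_add, smul_eq_mul, mul_assoc]

theorem fMPO_typeIIProduct [Fintype ι] (Nu : ι → ι → Matrix κ κ ℂ)
    (Nv : ι → ι → Matrix κ' κ' ℂ) (N : ℕ) :
    fMPO p (typeIIProduct p Nu Nv) N =
      (2 : ℂ)⁻¹ • (fMPO p (typeIITensor p Nu) N * fMPO p (typeIITensor p Nv) N) := by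
  ext n m
  rw [fMPO_typeIIProduct_apply, Matrix.smul_apply, mul_apply, Finset.smul_sum]
  refine Finset.sum_congr rfl fun k _ => ?_
  rw [smul_eq_mul, fMPO_typeIITensor_apply, fMPO_typeIITensor_apply, sgn_add]
  linear_combination (sgn (mpoSign p n k) * sgn (mpoSign p k m) / 2 *
    (List.ofFn fun j => Nu (n j) (k j)).prod.trace *
    (List.ofFn fun j => Nv (k j) (m j)).prod.trace) *
    two_mul_trace_pauliWord (∑ j, (p (n j) + p (k j))) (∑ j, (p (k j) + p (m j)))

lemma evenTensor_typeIIProduct [Fintype ι] (Nu : ι → ι → Matrix κ κ ℂ)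
    (Nv : ι → ι → Matrix κ' κ' ℂ) :
    EvenTensor (doubledP p) (doubledT (typeIIProduct p Nu Nv)) (pauliZ ⊗ₖ 1) := by
  rintro ⟨n, m⟩
  simp only [doubledT, doubledP, typeIIProduct, Finset.mul_sum, Finset.sum_mul, Finset.smul_sum]
  refine Finset.sum_congr rfl fun k _ => ?_
  rw [← mul_kronecker_mul, ← mul_kronecker_mul, pauliZ_mul_pauliWord, smul_kronecker, one_mul,
    mul_one, show p n + p k + (p k + p m) = p n + p m by grind]

end TypeII

lemma nonempty_of_smul_fMPO_mem_unitaryGroup {ι ν : Type*} [Fintype ι] [DecidableEq ι] [Nonempty ι]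
    [Fintype ν] [DecidableEq ν] (p : ι → ZMod 2) (U : ι → ι → Matrix ν ν ℂ) {N : ℕ} (c : ℂ)
    (hU : c • fMPO p U N ∈ unitaryGroup (Fin N → ι) ℂ) : Nonempty ν := by
  by_contra hν
  have : IsEmpty ν := not_nonempty_iff.mp hν
  have hzero : fMPO p U N = 0 := by
    ext n m
    simp [fMPO, trace]
  rw [hzero, smul_zero, mem_unitaryGroup_iff, zero_mul] at hU
  exact zero_ne_one hU

theorem typeII_product_is_typeI_general {d bu bv : ℕ} (hd : 1 ≤ d) (p : Fin d → ZMod 2)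
    (U : Fin d → Fin d → Matrix (Bool × Fin bu) (Bool × Fin bu) ℂ)
    (V : Fin d → Fin d → Matrix (Bool × Fin bv) (Bool × Fin bv) ℂ)
    (hUs : TypeIIStruct p U) (hVs : TypeIIStruct p V)
    (hUu : ∀ N : ℕ, 1 ≤ N →
      ((Real.sqrt 2 : ℂ))⁻¹ • fMPO p U N ∈ Matrix.unitaryGroup (Fin N → Fin d) ℂ)
    (hVu : ∀ N : ℕ, 1 ≤ N →
      ((Real.sqrt 2 : ℂ))⁻¹ • fMPO p V N ∈ Matrix.unitaryGroup (Fin N → Fin d) ℂ) :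
    ∃ (D' : ℕ), 1 ≤ D' ∧
      ∃ (Z' : Matrix (Fin D') (Fin D') ℂ)
        (W : Fin d → Fin d → Matrix (Fin D') (Fin D') ℂ),
        IsParityMatrix Z' ∧
        EvenTensor (doubledP p) (doubledT W) Z' ∧
        (∀ N : ℕ, 1 ≤ N →
          fMPO p W N =
            (((Real.sqrt 2 : ℂ))⁻¹ • fMPO p U N) * (((Real.sqrt 2 : ℂ))⁻¹ • fMPO p V N)) ∧
        (∀ N : ℕ, 1 ≤ N → fMPO p W N ∈ Matrix.unitaryGroup (Fin N → Fin d) ℂ) := by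
  obtain ⟨Nu, hNu⟩ := hUs
  obtain ⟨Nv, hNv⟩ := hVs
  obtain rfl : U = typeIITensor p Nu := funext₂ fun n m => by simp [hNu, typeIITensor, pauliWord]
  obtain rfl : V = typeIITensor p Nv := funext₂ fun n m => by simp [hNv, typeIITensor, pauliWord]
  have : Nonempty (Fin d) := ⟨⟨0, hd⟩⟩
  have : Nonempty (Fin bu) :=
    (nonempty_of_smul_fMPO_mem_unitaryGroup p _ _ (hUu 1 le_rfl)).map Prod.snd
  have : Nonempty (Fin bv) :=
    (nonempty_of_smul_fMPO_mem_unitaryGroup p _ _ (hVu 1 le_rfl)).map Prod.snd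
  let e := Fintype.equivFin (Bool × Fin bu × Fin bv)
  have hW (N : ℕ) : fMPO p (fun n m => reindex e e (typeIIProduct p Nu Nv n m)) N =
      ((Real.sqrt 2 : ℂ)⁻¹ • fMPO p (typeIITensor p Nu) N) *
        ((Real.sqrt 2 : ℂ)⁻¹ • fMPO p (typeIITensor p Nv) N) := by
    have half : (Real.sqrt 2 : ℂ)⁻¹ * (Real.sqrt 2 : ℂ)⁻¹ = 2⁻¹ := by
      rw [← mul_inv, ← Complex.ofReal_mul, Real.mul_self_sqrt zero_le_two, Complex.ofReal_ofNat]
    rw [fMPO_reindex, fMPO_typeIIProduct, smul_mul_smul, half]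
  exact ⟨_, Fintype.card_pos, reindex e e (pauliZ ⊗ₖ 1),
    fun n m => reindex e e (typeIIProduct p Nu Nv n m),
    (isParityMatrix_pauliZ.kronecker isParityMatrix_one).reindex e,
    (evenTensor_typeIIProduct p Nu Nv).reindex e, fun N _ => hW N,
    fun N hN => hW N ▸ mul_mem (hUu N hN) (hVu N hN)⟩

/-- The product of two type II fMPUs with antiperiodic boundary
conditions can be represented as an fMPO generated by a single even MPO tensor, which is
then a type I fMPU. -/
theorem typeII_product_is_typeI {d bu bv : ℕ} (hd : 1 ≤ d) (p : Fin d → ZMod 2)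
    (U : Fin d → Fin d → Matrix (Bool × Fin bu) (Bool × Fin bu) ℂ)
    (V : Fin d → Fin d → Matrix (Bool × Fin bv) (Bool × Fin bv) ℂ)
    (hUE : EvenTensor (doubledP p) (doubledT U) (ZBP bu))
    (hVE : EvenTensor (doubledP p) (doubledT V) (ZBP bv))
    (hUs : TypeIIStruct p U) (hVs : TypeIIStruct p V)
    (hUn : GradedNormal (mpoScaled ((Real.sqrt d : ℂ))⁻¹ U) (ZBP bu) 2)
    (hVn : GradedNormal (mpoScaled ((Real.sqrt d : ℂ))⁻¹ V) (ZBP bv) 2)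
    (hUu : ∀ N : ℕ, 1 ≤ N →
      ((Real.sqrt 2 : ℂ))⁻¹ • fMPO p U N ∈ Matrix.unitaryGroup (Fin N → Fin d) ℂ)
    (hVu : ∀ N : ℕ, 1 ≤ N →
      ((Real.sqrt 2 : ℂ))⁻¹ • fMPO p V N ∈ Matrix.unitaryGroup (Fin N → Fin d) ℂ) :
    ∃ (D' : ℕ), 1 ≤ D' ∧
      ∃ (Z' : Matrix (Fin D') (Fin D') ℂ)
        (W : Fin d → Fin d → Matrix (Fin D') (Fin D') ℂ),
        IsParityMatrix Z' ∧
        EvenTensor (doubledP p) (doubledT W) Z' ∧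
        (∀ N : ℕ, 1 ≤ N →
          fMPO p W N =
            (((Real.sqrt 2 : ℂ))⁻¹ • fMPO p U N) * (((Real.sqrt 2 : ℂ))⁻¹ • fMPO p V N)) ∧
        (∀ N : ℕ, 1 ≤ N → fMPO p W N ∈ Matrix.unitaryGroup (Fin N → Fin d) ℂ) :=
  typeII_product_is_typeI_general hd p U V hUs hVs hUu hVu

end

end FQCA
end

section
/- There exists a matrix O ∈ M₄(ℂ) with P O P = O (P = diag(1,−1,−1,1), i.e., O is parity-even) such that for every N ≥ 2 and every pair of distinct sites j, k ∈ {1,…,N}, the matrix U^{(N)†} ι_j(O) U^{(N)} does not act as the identity on the tensor factor at site k; that is, it is not equal to any matrix of the form obtained by tensoring I₄ at site k with a matrix on the remaining N−1 factors. In particular, although each U^{(N)} is unitary, the family {U^{(N)}} is not locality-preserving: it is a fermionic matrix product unitary that is not a quantum cellular automaton. -/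
/-!
Write `E_{ab}` for the matrix units of `M₃(ℂ)`. Since `U^{0,0} = 1`, `U^{a+1,b+1} = E_{ab}` and
the mixed blocks vanish, a product `U^{n₁,m₁} ⋯ U^{n_N,m_N}` is `0`, or `1` (all sites empty),
or a single matrix unit: read from the right, the bond state forces every `m_i`. After taking
`tr(Z ·)`, each row `n` of `U^{(N)}` has exactly one nonzero entry, equal to `±1`, at the
configuration obtained by cyclically shifting the occupations of `n` along its occupied sites.
Transposing the product reverses the chain, so the same holds for columns: `U^{(N)}` is a signed
permutation matrix. Hence it is unitary, and it conjugates a diagonal operator into a diagonal one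
whose entry at `m` is the original entry at the preimage of `m`.

For `O = |1⟩⟨1|`, the configuration with `1` at `j` is its own preimage, whereas the one with `1`
at `j` and `2` at `k` is the image of the one with `2` at `j` and `1` at `k`. So the diagonal
entries of `U^{(N)†} ι_j(O) U^{(N)}` at these two configurations are `1` and `0`, although the
configurations differ only at site `k`.
-/

open Matrix Kronecker
open scoped ComplexOrder

namespace FQCA

noncomputable section

/-- Physical parity for two fermionic modes per site: `|0| = |3| = 0`, `|1| = |2| = 1`. -/
def pEx : Fin 4 → ZMod 2 := ![0, 1, 1, 0]

/-- The bond parity matrix `Z = diag(1,1,-1)` of the `D = 3` example. -/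
def Zex : Matrix (Fin 3) (Fin 3) ℂ := Matrix.diagonal ![1, 1, -1]

/-- The explicit `D = 3` MPO tensor: `U^{0,0} = I₃`,
`(U^{n,m})_{α,β} = δ_{α,n-1} δ_{β,m-1}` for `n,m ∈ {1,2,3}`, and `U^{n,m} = 0` whenever
exactly one of `n,m` is `0`. -/
def Uex : Fin 4 → Fin 4 → Matrix (Fin 3) (Fin 3) ℂ := fun n m =>
  if n = 0 ∧ m = 0 then (1 : Matrix (Fin 3) (Fin 3) ℂ)
  else if n ≠ 0 ∧ m ≠ 0 then
    Matrix.of (fun α β : Fin 3 =>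
      if (α : ℕ) + 1 = (n : ℕ) ∧ (β : ℕ) + 1 = (m : ℕ) then (1 : ℂ) else 0)
  else 0

/-- The single-site physical parity matrix `P = diag(1,-1,-1,1)` of the example. -/
def PmatEx : Matrix (Fin 4) (Fin 4) ℂ := Matrix.diagonal (fun i => sgn (pEx i))

/-- The local operator `O` placed at site `j`:
`ι_j(O) = I^{⊗(j-1)} ⊗ O ⊗ I^{⊗(N-j)}`. -/
def iotaEx {N : ℕ} (O : Matrix (Fin 4) (Fin 4) ℂ) (j : Fin N) :
    Matrix (Fin N → Fin 4) (Fin N → Fin 4) ℂ :=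
  Matrix.of fun n m =>
    O (n j) (m j) * ∏ l ∈ Finset.univ.erase j, (if n l = m l then (1 : ℂ) else 0)

section ListProd

variable {M : Type*} [Monoid M]

theorem _root_.List.prod_ofFn_eq_of_eq_one {N : ℕ} (f : Fin N → M) (j : Fin N)
    (hf : ∀ l, l ≠ j → f l = 1) : (List.ofFn f).prod = f j := by
  induction N with
  | zero => exact j.elim0
  | succ N ih =>
    rw [List.ofFn_succ, List.prod_cons]
    cases j using Fin.cases with
    | zero =>
      rw [List.prod_eq_one (by simpa using fun l => hf l.succ (Fin.succ_ne_zero l)), mul_one]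
    | succ j =>
      rw [hf 0 (Fin.succ_ne_zero j).symm, one_mul]
      exact ih _ j fun l hl => hf l.succ (Fin.succ_injective _ |>.ne hl)

theorem _root_.List.prod_ofFn_eq_mul_of_eq_one {N : ℕ} (f : Fin N → M) {j k : Fin N}
    (hjk : j < k) (hf : ∀ l, l ≠ j → l ≠ k → f l = 1) :
    (List.ofFn f).prod = f j * f k := by
  induction N with
  | zero => exact j.elim0
  | succ N ih =>
    rw [List.ofFn_succ, List.prod_cons]
    cases k using Fin.cases with
    | zero => exact absurd hjk (Fin.not_lt_zero j)
    | succ k =>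
    cases j using Fin.cases with
    | zero =>
      exact congrArg _ (List.prod_ofFn_eq_of_eq_one _ k fun l hl =>
        hf l.succ (Fin.succ_ne_zero l) (Fin.succ_injective _ |>.ne hl))
    | succ j =>
      rw [hf 0 (Fin.succ_ne_zero j).symm (Fin.succ_ne_zero k).symm, one_mul]
      exact ih _ (Fin.succ_lt_succ_iff.mp hjk) fun l hl hl' =>
        hf l.succ (Fin.succ_injective _ |>.ne hl) (Fin.succ_injective _ |>.ne hl')

end ListProd

theorem _root_.List.reverse_ofFn {α : Type*} {N : ℕ} (f : Fin N → α) :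
    (List.ofFn f).reverse = List.ofFn (f ∘ Fin.rev) := by
  refine List.ext_getElem (by simp) fun i h₁ _ => ?_
  simp only [List.getElem_reverse, List.length_ofFn, List.getElem_ofFn, Function.comp_apply,
    Fin.rev]
  congr 2
  omega

def chainProd {ι ν R : Type*} [Fintype ν] [DecidableEq ν] [Semiring R]
    (W : ι → ι → Matrix ν ν R) {N : ℕ} (n m : Fin N → ι) : Matrix ν ν R :=
  (List.ofFn fun j => W (n j) (m j)).prod

theorem chainProd_cons {ι ν R : Type*} [Fintype ν] [DecidableEq ν] [Semiring R]
    (W : ι → ι → Matrix ν ν R) {N : ℕ} (n₀ m₀ : ι) (n m : Fin N → ι) :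
    chainProd W (Fin.cons n₀ n) (Fin.cons m₀ m) = W n₀ m₀ * chainProd W n m := by
  simp [chainProd, List.ofFn_succ]

section ChainSupport

variable {ι ν R : Type*} [Fintype ν] [DecidableEq ν] [Semiring R]
  {W : ι → ι → Matrix ν ν R} {o : ι} {N : ℕ} {n m : Fin N → ι}

theorem chainProd_eq_apply_of_eq (ho : W o o = 1) {j : Fin N} (hn : ∀ l ≠ j, n l = o)
    (hm : ∀ l ≠ j, m l = o) : chainProd W n m = W (n j) (m j) :=
  List.prod_ofFn_eq_of_eq_one _ j fun l hl => by rw [hn l hl, hm l hl, ho]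

theorem chainProd_eq_mul_of_eq (ho : W o o = 1) {j k : Fin N} (hjk : j < k)
    (hn : ∀ l, l ≠ j → l ≠ k → n l = o) (hm : ∀ l, l ≠ j → l ≠ k → m l = o) :
    chainProd W n m = W (n j) (m j) * W (n k) (m k) :=
  List.prod_ofFn_eq_mul_of_eq_one _ hjk fun l hl hl' => by rw [hn l hl hl', hm l hl hl', ho]

end ChainSupport

theorem single_mul_apply_eq_ite {ν R : Type*} [Fintype ν] [DecidableEq ν] [Semiring R]
    (a b α β : ν) (c : R) (Y : Matrix ν ν R) :
    (single a b c * Y) α β = if α = a then c * Y b β else 0 := by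
  split_ifs with h
  · subst h
    exact single_mul_apply_same c α b β Y
  · exact single_mul_apply_of_ne c a b α β h Y

def IsMatrixUnitRow {R : Type*} [Semiring R] {D N : ℕ}
    (W : Fin (D + 1) → Fin (D + 1) → Matrix (Fin D) (Fin D) R) (n : Fin N → Fin (D + 1))
    (a : Fin D) (σ : Fin D → Fin N → Fin (D + 1)) : Prop :=
  ∀ m α β, chainProd W n m α β = if α = a ∧ σ β = m then 1 else 0

structure IsShiftTensor {R : Type*} [Semiring R] {D : ℕ}
    (W : Fin (D + 1) → Fin (D + 1) → Matrix (Fin D) (Fin D) R) : Prop where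
  zero_zero : W 0 0 = 1
  zero_succ : ∀ b : Fin D, W 0 b.succ = 0
  succ_zero : ∀ a : Fin D, W a.succ 0 = 0
  succ_succ : ∀ a b : Fin D, W a.succ b.succ = single a b 1

namespace IsShiftTensor

section Semiring

variable {R : Type*} [Semiring R] {D : ℕ}
  {W : Fin (D + 1) → Fin (D + 1) → Matrix (Fin D) (Fin D) R}

theorem zero_left (hW : IsShiftTensor W) (b : Fin (D + 1)) : W 0 b = if b = 0 then 1 else 0 := by
  cases b using Fin.cases with
  | zero => simp [hW.zero_zero]
  | succ b => simp [hW.zero_succ]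

theorem chainProd_zero_left (hW : IsShiftTensor W) {N : ℕ} (m : Fin N → Fin (D + 1)) :
    chainProd W 0 m = if m = 0 then 1 else 0 := by
  split_ifs with hm
  · subst hm
    exact List.prod_eq_one (by simp [hW.zero_zero])
  · obtain ⟨j, hj⟩ := Function.ne_iff.mp hm
    refine List.prod_eq_zero (List.mem_ofFn.mpr ⟨j, ?_⟩)
    rw [Pi.zero_apply, hW.zero_left, if_neg (by simpa using hj)]

theorem isMatrixUnitRow_cons_succ_zero (hW : IsShiftTensor W) {N : ℕ} (c : Fin D) :
    IsMatrixUnitRow W (Fin.cons c.succ (0 : Fin N → Fin (D + 1))) c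
      fun β => Fin.cons β.succ 0 := by
  intro m α β
  induction m using Fin.consCases with | cons m₀ m => ?_
  rw [chainProd_cons, hW.chainProd_zero_left]
  cases m₀ using Fin.cases with
  | zero => simp [hW.succ_zero]
  | succ b =>
    simp only [hW.succ_succ, single_mul_apply_eq_ite, one_mul]
    split_ifs <;> simp_all [one_apply, eq_comm]

theorem isMatrixUnitRow_cons_zero (hW : IsShiftTensor W) {N : ℕ} {n : Fin N → Fin (D + 1)}
    {a : Fin D} {σ : Fin D → Fin N → Fin (D + 1)} (h : IsMatrixUnitRow W n a σ) :
    IsMatrixUnitRow W (Fin.cons 0 n) a fun β => Fin.cons 0 (σ β) := by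
  intro m α β
  induction m using Fin.consCases with | cons m₀ m => ?_
  rw [chainProd_cons, hW.zero_left]
  cases m₀ using Fin.cases with
  | zero => simp [h m α β]
  | succ b => simp [(Fin.succ_ne_zero b).symm]

theorem isMatrixUnitRow_cons_succ (hW : IsShiftTensor W) {N : ℕ} {n : Fin N → Fin (D + 1)}
    {a : Fin D} {σ : Fin D → Fin N → Fin (D + 1)} (h : IsMatrixUnitRow W n a σ) (c : Fin D) :
    IsMatrixUnitRow W (Fin.cons c.succ n) c fun β => Fin.cons a.succ (σ β) := by
  intro m α β
  induction m using Fin.consCases with | cons m₀ m => ?_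
  rw [chainProd_cons]
  cases m₀ using Fin.cases with
  | zero => simp [hW.succ_zero]
  | succ b =>
    simp only [hW.succ_succ, single_mul_apply_eq_ite, h m, one_mul, Fin.cons_inj, Fin.succ_inj]
    split_ifs <;> grind

theorem exists_isMatrixUnitRow (hW : IsShiftTensor W) {N : ℕ} {n : Fin N → Fin (D + 1)}
    (hn : n ≠ 0) : ∃ a σ, IsMatrixUnitRow W n a σ := by
  induction N with
  | zero => exact absurd (Subsingleton.elim n 0) hn
  | succ N ih =>
    induction n using Fin.consCases with | cons n₀ n => ?_
    by_cases hn' : n = 0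
    · subst hn'
      cases n₀ using Fin.cases with
      | zero => exact absurd Matrix.cons_zero_zero hn
      | succ c => exact ⟨_, _, hW.isMatrixUnitRow_cons_succ_zero c⟩
    · obtain ⟨a, σ, h⟩ := ih hn'
      cases n₀ using Fin.cases with
      | zero => exact ⟨_, _, hW.isMatrixUnitRow_cons_zero h⟩
      | succ c => exact ⟨_, _, hW.isMatrixUnitRow_cons_succ h c⟩

theorem exists_trace_diagonal_mul_chainProd (hW : IsShiftTensor W) (z : Fin D → R) {N : ℕ}
    (n : Fin N → Fin (D + 1)) : ∃ m₀, ∃ c ∈ insert (∑ α, z α) (Set.range z),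
      ∀ m, trace (diagonal z * chainProd W n m) = if m = m₀ then c else 0 := by
  by_cases hn : n = 0
  · refine ⟨0, _, Set.mem_insert _ _, fun m => ?_⟩
    rw [hn, hW.chainProd_zero_left]
    split_ifs <;> simp [trace_diagonal]
  · obtain ⟨a, σ, hrow⟩ := hW.exists_isMatrixUnitRow hn
    refine ⟨σ a, z a, Set.mem_insert_of_mem _ ⟨a, rfl⟩, fun m => ?_⟩
    simp only [trace, diag, diagonal_mul, hrow _, mul_ite, mul_one, mul_zero, ite_and]
    simp [eq_comm]

theorem eq_of_trace_diagonal_mul_chainProd_ne_zero (hW : IsShiftTensor W) (z : Fin D → R)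
    {N : ℕ} {n m m' : Fin N → Fin (D + 1)} (h : trace (diagonal z * chainProd W n m) ≠ 0)
    (h' : trace (diagonal z * chainProd W n m') ≠ 0) : m = m' := by
  obtain ⟨m₀, c, -, hc⟩ := hW.exists_trace_diagonal_mul_chainProd z n
  rw [hc] at h h'
  exact (ite_ne_right_iff.mp h).1.trans (ite_ne_right_iff.mp h').1.symm

end Semiring

section CommSemiring

variable {R : Type*} [CommSemiring R] {D : ℕ}
  {W : Fin (D + 1) → Fin (D + 1) → Matrix (Fin D) (Fin D) R}

theorem transpose_apply (hW : IsShiftTensor W) (n m : Fin (D + 1)) : (W n m)ᵀ = W m n := by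
  cases n using Fin.cases <;> cases m using Fin.cases <;>
    simp [hW.zero_zero, hW.zero_succ, hW.succ_zero, hW.succ_succ, transpose_single]

theorem trace_diagonal_mul_chainProd_rev (hW : IsShiftTensor W) (z : Fin D → R) {N : ℕ}
    (n m : Fin N → Fin (D + 1)) :
    trace (diagonal z * chainProd W (m ∘ Fin.rev) (n ∘ Fin.rev)) =
      trace (diagonal z * chainProd W n m) := by
  have hrev : chainProd W (m ∘ Fin.rev) (n ∘ Fin.rev) = (chainProd W n m)ᵀ := by
    rw [chainProd, chainProd, transpose_list_prod, List.map_ofFn, List.reverse_ofFn]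
    simp [Function.comp_def, hW.transpose_apply]
  rw [hrev, ← trace_transpose, transpose_mul, diagonal_transpose, transpose_transpose,
    trace_mul_comm]

theorem eq_of_trace_diagonal_mul_chainProd_ne_zero_left (hW : IsShiftTensor W) (z : Fin D → R)
    {N : ℕ} {n n' m : Fin N → Fin (D + 1)} (h : trace (diagonal z * chainProd W n m) ≠ 0)
    (h' : trace (diagonal z * chainProd W n' m) ≠ 0) : n = n' := by
  rw [← hW.trace_diagonal_mul_chainProd_rev] at h h'
  have := hW.eq_of_trace_diagonal_mul_chainProd_ne_zero z h h'
  funext i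
  simpa using congrFun this i.rev

end CommSemiring

end IsShiftTensor

structure IsUnimodularMonomial {ι 𝕜 : Type*} [RCLike 𝕜] (M : Matrix ι ι 𝕜) : Prop where
  exists_row : ∀ n, ∃ m, ‖M n m‖ = 1 ∧ ∀ m', M n m' ≠ 0 → m' = m
  eq_of_ne_zero : ∀ {n n' m}, M n m ≠ 0 → M n' m ≠ 0 → n = n'

namespace IsUnimodularMonomial

variable {ι 𝕜 : Type*} [RCLike 𝕜] {M : Matrix ι ι 𝕜}

theorem norm_eq_one (hM : IsUnimodularMonomial M) {n m : ι} (h : M n m ≠ 0) :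
    ‖M n m‖ = 1 := by
  obtain ⟨m₀, hm₀, huniq⟩ := hM.exists_row n
  rwa [huniq m h]

theorem mul_star_self (hM : IsUnimodularMonomial M) {n m : ι} (h : M n m ≠ 0) :
    M n m * star (M n m) = 1 := by
  rw [RCLike.star_def, RCLike.mul_conj, hM.norm_eq_one h]
  simp

theorem mem_unitaryGroup [Fintype ι] [DecidableEq ι] (hM : IsUnimodularMonomial M) :
    M ∈ unitaryGroup ι 𝕜 := by
  rw [mem_unitaryGroup_iff]
  ext n n'
  rw [mul_apply, one_apply]
  split_ifs with hnn
  · subst hnn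
    obtain ⟨m₀, hm₀, huniq⟩ := hM.exists_row n
    have hne : M n m₀ ≠ 0 := by simp [← norm_ne_zero_iff, hm₀]
    rw [Finset.sum_eq_single m₀
      (fun m _ hm => by rw [not_not.mp (mt (huniq m) hm), zero_mul]) (by simp)]
    exact hM.mul_star_self hne
  · refine Finset.sum_eq_zero fun m _ => ?_
    by_contra h
    exact hnn (hM.eq_of_ne_zero (left_ne_zero_of_mul h)
      (by simpa using right_ne_zero_of_mul h))

theorem conjTranspose_mul_diagonal_mul_apply_self [Fintype ι] [DecidableEq ι]
    (hM : IsUnimodularMonomial M) (d : ι → 𝕜)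
    {n m : ι} (h : M n m ≠ 0) : (Mᴴ * diagonal d * M) m m = d n := by
  rw [mul_apply, Finset.sum_eq_single n]
  · rw [mul_diagonal, conjTranspose_apply, mul_right_comm, mul_comm (star _), hM.mul_star_self h,
      one_mul]
  · intro n' _ hn'
    by_cases h' : M n' m = 0
    · simp [h']
    · exact absurd (hM.eq_of_ne_zero h' h) hn'
  · simp

end IsUnimodularMonomial

theorem sgn_mul_self (x : ZMod 2) : sgn x * sgn x = 1 := by
  rw [sgn, ← mul_pow, neg_one_mul, neg_neg, one_pow]

theorem norm_sgn (x : ZMod 2) : ‖sgn x‖ = 1 := by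
  simp [sgn]

theorem fMPO_PBC_apply {ι : Type*} (p : ι → ZMod 2) {ν : Type*} [Fintype ν] [DecidableEq ν]
    (Z : Matrix ν ν ℂ) (U : ι → ι → Matrix ν ν ℂ) {N : ℕ} (n m : Fin N → ι) :
    fMPO_PBC p Z U N n m = sgn (mpoSign p n m) * trace (Z * chainProd U n m) :=
  rfl

theorem fMPO_PBC_apply_ne_zero_iff {ι : Type*} (p : ι → ZMod 2) {ν : Type*} [Fintype ν]
    [DecidableEq ν] (Z : Matrix ν ν ℂ) (U : ι → ι → Matrix ν ν ℂ) {N : ℕ}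
    (n m : Fin N → ι) :
    fMPO_PBC p Z U N n m ≠ 0 ↔ trace (Z * chainProd U n m) ≠ 0 := by
  rw [fMPO_PBC_apply, mul_ne_zero_iff, ← norm_ne_zero_iff (a := sgn _), norm_sgn]
  exact and_iff_right one_ne_zero

theorem isShiftTensor_Uex : IsShiftTensor Uex where
  zero_zero := by simp [Uex]
  zero_succ b := by simp [Uex, Fin.succ_ne_zero]
  succ_zero a := by simp [Uex, Fin.succ_ne_zero]
  succ_succ a b := by
    ext α β
    rw [Uex, if_neg (by simp), if_pos ⟨Fin.succ_ne_zero a, Fin.succ_ne_zero b⟩, of_apply,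
      single_apply]
    simp only [Fin.val_succ, Nat.add_right_cancel_iff, Fin.ext_iff, eq_comm]

theorem isUnimodularMonomial_fMPO_PBC (N : ℕ) :
    IsUnimodularMonomial (fMPO_PBC pEx Zex Uex N) where
  exists_row n := by
    obtain ⟨m₀, c, hc, htrace⟩ :=
      isShiftTensor_Uex.exists_trace_diagonal_mul_chainProd ![1, 1, -1] n
    have hc : ‖c‖ = 1 := by
      simp only [Set.mem_insert_iff, Set.mem_range] at hc
      rcases hc with rfl | ⟨α, rfl⟩
      · simp [Fin.sum_univ_three]
      · fin_cases α <;> simp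
    refine ⟨m₀, ?_, fun m h => ?_⟩
    · rw [fMPO_PBC_apply, Zex, htrace, if_pos rfl, norm_mul, norm_sgn, hc, one_mul]
    · rw [fMPO_PBC_apply_ne_zero_iff, Zex, htrace] at h
      exact (ite_ne_right_iff.mp h).1
  eq_of_ne_zero h h' := by
    rw [fMPO_PBC_apply_ne_zero_iff] at h h'
    exact isShiftTensor_Uex.eq_of_trace_diagonal_mul_chainProd_ne_zero_left _ h h'

theorem fMPO_PBC_apply_single_ne_zero {N : ℕ} (j : Fin N) :
    fMPO_PBC pEx Zex Uex N (Pi.single j 1) (Pi.single j 1) ≠ 0 := by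
  rw [fMPO_PBC_apply_ne_zero_iff, chainProd_eq_apply_of_eq isShiftTensor_Uex.zero_zero
    (fun l hl => Pi.single_eq_of_ne hl _) (fun l hl => Pi.single_eq_of_ne hl _),
    Pi.single_eq_same]
  rw [show (1 : Fin 4) = (0 : Fin 3).succ from rfl, isShiftTensor_Uex.succ_succ]
  simp [trace_mul_single, Zex]

theorem fMPO_PBC_apply_swap_ne_zero {N : ℕ} {j k : Fin N} (hjk : j ≠ k) :
    fMPO_PBC pEx Zex Uex N (Function.update (Pi.single j 2) k 1)
      (Function.update (Pi.single j 1) k 2) ≠ 0 := by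
  set n : Fin N → Fin 4 := Function.update (Pi.single j 2) k 1
  set m : Fin N → Fin 4 := Function.update (Pi.single j 1) k 2
  have hn : ∀ l, l ≠ j → l ≠ k → n l = 0 := fun l hl hl' => by simp [n, hl, hl']
  have hm : ∀ l, l ≠ j → l ≠ k → m l = 0 := fun l hl hl' => by simp [m, hl, hl']
  have hj : Uex (n j) (m j) = single 1 0 1 := by
    simpa [n, m, hjk] using isShiftTensor_Uex.succ_succ 1 0
  have hk : Uex (n k) (m k) = single 0 1 1 := by
    simpa [n, m] using isShiftTensor_Uex.succ_succ 0 1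
  rw [fMPO_PBC_apply_ne_zero_iff]
  rcases hjk.lt_or_gt with h | h
  · rw [chainProd_eq_mul_of_eq isShiftTensor_Uex.zero_zero h hn hm, hj, hk,
      single_mul_single_same]
    simp [trace_mul_single, Zex]
  · rw [chainProd_eq_mul_of_eq isShiftTensor_Uex.zero_zero h (fun l hl hl' => hn l hl' hl)
      (fun l hl hl' => hm l hl' hl), hj, hk, single_mul_single_same]
    simp [trace_mul_single, Zex]

theorem iotaEx_diagonal {N : ℕ} (v : Fin 4 → ℂ) (j : Fin N) :
    iotaEx (diagonal v) j = diagonal fun n => v (n j) := by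
  ext n m
  rw [iotaEx, of_apply, Finset.prod_boole, diagonal_apply, diagonal_apply]
  by_cases h : n = m
  · simp [h]
  · obtain ⟨l, hl⟩ := Function.ne_iff.mp h
    rw [if_neg h]
    by_cases hlj : l = j
    · rw [if_neg (hlj ▸ hl), zero_mul]
    · exact mul_eq_zero_of_right _
        (if_neg fun hall => hl (hall l (Finset.mem_erase.mpr ⟨hlj, Finset.mem_univ l⟩)))

theorem PmatEx_mul_diagonal_mul_PmatEx (v : Fin 4 → ℂ) :
    PmatEx * diagonal v * PmatEx = diagonal v := by
  rw [PmatEx, diagonal_mul_diagonal, diagonal_mul_diagonal]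
  congr 1
  funext i
  rw [mul_right_comm, sgn_mul_self, one_mul]

/-- The explicit periodic fMPU is unitary but not locality-preserving:
there is a parity-even single-site operator `O` such that, for every `N ≥ 2` and all
distinct sites `j ≠ k`, the conjugated operator `U^{(N)†} ι_j(O) U^{(N)}` does not act as
the identity on the tensor factor at site `k`. Hence this fMPU is not a quantum cellular
automaton. -/
theorem explicit_periodic_fMPU_not_locality_preserving :
    (∀ N : ℕ, 1 ≤ N →
      fMPO_PBC pEx Zex Uex N ∈ Matrix.unitaryGroup (Fin N → Fin 4) ℂ) ∧
    ∃ O : Matrix (Fin 4) (Fin 4) ℂ,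
      PmatEx * O * PmatEx = O ∧
      ∀ N : ℕ, 2 ≤ N → ∀ j k : Fin N, j ≠ k →
        ¬ ∃ R : Matrix ({l : Fin N // l ≠ k} → Fin 4) ({l : Fin N // l ≠ k} → Fin 4) ℂ,
            ∀ n m : Fin N → Fin 4,
              ((fMPO_PBC pEx Zex Uex N)ᴴ * iotaEx O j * fMPO_PBC pEx Zex Uex N) n m =
                (if n k = m k then (1 : ℂ) else 0) *
                  R (fun l => n l.1) (fun l => m l.1) := by
  refine ⟨fun N _ => (isUnimodularMonomial_fMPO_PBC N).mem_unitaryGroup,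
    diagonal (Pi.single 1 1), PmatEx_mul_diagonal_mul_PmatEx _, ?_⟩
  rintro N - j k hjk ⟨R, hR⟩
  have hU := isUnimodularMonomial_fMPO_PBC N
  set m₀ : Fin N → Fin 4 := Pi.single j 1
  set m₁ : Fin N → Fin 4 := Function.update m₀ k 2
  have h₀ := hR m₀ m₀
  have h₁ := hR m₁ m₁
  rw [iotaEx_diagonal, hU.conjTranspose_mul_diagonal_mul_apply_self _
    (fMPO_PBC_apply_single_ne_zero j)] at h₀
  rw [iotaEx_diagonal, hU.conjTranspose_mul_diagonal_mul_apply_self _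
    (fMPO_PBC_apply_swap_ne_zero hjk)] at h₁
  have hoff : (fun l : {l // l ≠ k} => m₁ l) = fun l => m₀ l.1 :=
    funext fun l => Function.update_of_ne l.2 _ _
  rw [if_pos rfl, one_mul] at h₀ h₁
  rw [hoff, ← h₀] at h₁
  simp [hjk] at h₁

end

end FQCA
end
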